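/- Let R be a commutative ring, ε ∈ R with ε² = 1, S an associative R-algebra, and Q₀, Q₁, Q₂, Q₃ ∈ S satisfying the A1_ε relations. With b₀ = 1, b₁ = ε, b₂ = b₃ = 1, phase P(μ,ν) = −1 if μ ≠ ν and μ,ν ∈ {1,2,3} and P(μ,ν) = 1 otherwise, c := Q₀² + ε·Q₁² + Q₂² + Q₃², and y := c − Q₀², one has: Σ_{μ,ν,ρ∈{0,1,2,3}} P(μ,ν)·P(μ,ρ)·P(ν,ρ) · b_μ b_ν b_ρ · Q_μ Q_ν Q_ρ Q_μ Q_ν Q_ρ = c³ − 3ε·c·y + 2·y. -/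
import Mathlib


/-- Diagonal entries `b₀ = 1, b₁ = ε, b₂ = b₃ = 1` of the inverse bilinear form
`C = diag(1,ε,1,1)` of `A1_ε`. -/
def bC {R : Type*} [CommRing R] (ε : R) : Fin 4 → R := ![1, ε, 1, 1]

/-- Grading phase: `P(μ,ν) = −1` if `μ ≠ ν` and both `μ, ν ∈ {1,2,3}`,
otherwise `P(μ,ν) = 1`. -/
def phC {R : Type*} [CommRing R] (μ ν : Fin 4) : R :=
  if μ ≠ ν ∧ μ ≠ 0 ∧ ν ≠ 0 then -1 else 1

set_option maxHeartbeats 2000000 in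
/-- **Weight of the order-3 chord diagram with three pairwise intersecting
chords** (endpoint pattern `μ ν ρ μ ν ρ`):
`Σ_{μ,ν,ρ} P(μ,ν)P(μ,ρ)P(ν,ρ)·b_μ b_ν b_ρ·Q_μ Q_ν Q_ρ Q_μ Q_ν Q_ρ
 = c³ − 3ε·c·y + 2·y` where `c = Q₀² + ε·Q₁² + Q₂² + Q₃²` and `y = c − Q₀²`. -/
theorem A1eps_triple_crossing_weight
    {R : Type*} [CommRing R] {S : Type*} [Ring S] [Algebra R S]
    (ε : R) (hε : ε ^ 2 = 1)
    (Q : Fin 4 → S)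
    (h01 : Q 0 * Q 1 = Q 1 * Q 0)
    (h02 : Q 0 * Q 2 = Q 2 * Q 0)
    (h03 : Q 0 * Q 3 = Q 3 * Q 0)
    (h12 : Q 1 * Q 2 + Q 2 * Q 1 = Q 3)
    (h23 : Q 2 * Q 3 + Q 3 * Q 2 = ε • Q 1)
    (h31 : Q 3 * Q 1 + Q 1 * Q 3 = Q 2) :
    (∑ μ : Fin 4, ∑ ν : Fin 4, ∑ ρ : Fin 4,
        (phC (R := R) μ ν * phC (R := R) μ ρ * phC (R := R) ν ρ *
            (bC ε μ * bC ε ν * bC ε ρ)) •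
          (Q μ * Q ν * Q ρ * Q μ * Q ν * Q ρ))
      = (Q 0 ^ 2 + ε • Q 1 ^ 2 + Q 2 ^ 2 + Q 3 ^ 2) ^ 3
        - ((3 : R) * ε) •
            ((Q 0 ^ 2 + ε • Q 1 ^ 2 + Q 2 ^ 2 + Q 3 ^ 2) *
              ((Q 0 ^ 2 + ε • Q 1 ^ 2 + Q 2 ^ 2 + Q 3 ^ 2) - Q 0 ^ 2))
        + (2 : R) • ((Q 0 ^ 2 + ε • Q 1 ^ 2 + Q 2 ^ 2 + Q 3 ^ 2) - Q 0 ^ 2) := by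
  have hεε : ε * ε = 1 := by rw [← sq]; exact hε
  have c10 : Q 1 * Q 0 = Q 0 * Q 1 := h01.symm
  have c20 : Q 2 * Q 0 = Q 0 * Q 2 := h02.symm
  have c30 : Q 3 * Q 0 = Q 0 * Q 3 := h03.symm
  have c10' : ∀ x, Q 1 * (Q 0 * x) = Q 0 * (Q 1 * x) := fun x => by
    rw [← mul_assoc, c10, mul_assoc]
  have c20' : ∀ x, Q 2 * (Q 0 * x) = Q 0 * (Q 2 * x) := fun x => by
    rw [← mul_assoc, c20, mul_assoc]
  have c30' : ∀ x, Q 3 * (Q 0 * x) = Q 0 * (Q 3 * x) := fun x => by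
    rw [← mul_assoc, c30, mul_assoc]
  have r21 : Q 2 * Q 1 = Q 3 - Q 1 * Q 2 := eq_sub_of_add_eq' h12
  have r32 : Q 3 * Q 2 = ε • Q 1 - Q 2 * Q 3 := eq_sub_of_add_eq' h23
  have r31 : Q 3 * Q 1 = Q 2 - Q 1 * Q 3 := eq_sub_of_add_eq h31
  have r21' : ∀ x, Q 2 * (Q 1 * x) = Q 3 * x - Q 1 * (Q 2 * x) := fun x => by
    rw [← mul_assoc, r21, sub_mul, mul_assoc]
  have r32' : ∀ x, Q 3 * (Q 2 * x) = ε • (Q 1 * x) - Q 2 * (Q 3 * x) := fun x => by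
    rw [← mul_assoc, r32, sub_mul, mul_assoc, smul_mul_assoc]
  have r31' : ∀ x, Q 3 * (Q 1 * x) = Q 2 * x - Q 1 * (Q 3 * x) := fun x => by
    rw [← mul_assoc, r31, sub_mul, mul_assoc]
  have ph00 : phC (R := R) 0 0 = 1 := by simp [phC]
  have ph01 : phC (R := R) 0 1 = 1 := by simp [phC]
  have ph02 : phC (R := R) 0 2 = 1 := by simp [phC]
  have ph03 : phC (R := R) 0 3 = 1 := by simp [phC]
  have ph10 : phC (R := R) 1 0 = 1 := by simp [phC]
  have ph11 : phC (R := R) 1 1 = 1 := by simp [phC]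
  have ph12 : phC (R := R) 1 2 = -1 := by simp [phC]
  have ph13 : phC (R := R) 1 3 = -1 := by simp [phC]
  have ph20 : phC (R := R) 2 0 = 1 := by simp [phC]
  have ph21 : phC (R := R) 2 1 = -1 := by simp [phC]
  have ph22 : phC (R := R) 2 2 = 1 := by simp [phC]
  have ph23 : phC (R := R) 2 3 = -1 := by simp [phC]
  have ph30 : phC (R := R) 3 0 = 1 := by simp [phC]
  have ph31 : phC (R := R) 3 1 = -1 := by simp [phC]
  have ph32 : phC (R := R) 3 2 = -1 := by simp [phC]
  have ph33 : phC (R := R) 3 3 = 1 := by simp [phC]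
  have bb0 : bC ε 0 = 1 := by simp [bC]
  have bb1 : bC ε 1 = ε := by simp [bC]
  have bb2 : bC ε 2 = 1 := by simp [bC]
  have bb3 : bC ε 3 = 1 := by simp [bC]
  simp only [Fin.sum_univ_four, ph00,ph01,ph02,ph03,ph10,ph11,ph12,ph13,ph20,ph21,ph22,ph23,ph30,ph31,ph32,ph33,bb0,bb1,bb2,bb3, one_mul, mul_one, neg_mul, mul_neg, neg_neg,
    one_smul, neg_smul]
  simp only [pow_succ, pow_zero, one_mul, mul_assoc, mul_add, add_mul, mul_sub, sub_mul,
    smul_mul_assoc, mul_smul_comm, smul_add, smul_sub, smul_smul, smul_neg, neg_smul,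
    c10', c20', c30', c10, c20, c30, r21', r32', r31', r21, r32, r31,
    hεε, mul_one, one_mul, one_smul, neg_neg, neg_mul, mul_neg]
  module
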